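/- Let ε > 0, δ > 0, C > 0, and let a, b, c ∈ ℝ with max(a - b, a - c) ≥ ε, (a - b) + (a - c) ≥ 0, and |a|, |b|, |c| ≤ C. Define g(α) = (1+δ)α - (δ/(4C))α². Then (g(a) - g(b)) + (g(a) - g(c)) ≥ (δ/(4C))·ε². -/

import Mathlib

/-! Write the sum of the two differences of `g(α) = pα - qα²` at `a` as
`(p - 2qa)·((a - b) + (a - c)) + q·((a - b)² + (a - c)²)`. Since `a ≤ C`, the slope
`p - 2qa = 1 + δ - δa/(2C)` is positive, so the first term is nonnegative, and the second is
at least `q ε²` because one of `a - b`, `a - c` is at least `ε`. -/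

lemma sq_le_sq_add_sq_of_le_max {ε x y : ℝ} (hε : 0 ≤ ε) (h : ε ≤ max x y) :
    ε ^ 2 ≤ x ^ 2 + y ^ 2 := by
  rcases le_max_iff.mp h with hx | hy
  · nlinarith [pow_le_pow_left₀ hε hx 2, sq_nonneg y]
  · nlinarith [pow_le_pow_left₀ hε hy 2, sq_nonneg x]

lemma quadratic_sum_sub_eq (p q a b c : ℝ) :
    (p * a - q * a ^ 2 - (p * b - q * b ^ 2)) + (p * a - q * a ^ 2 - (p * c - q * c ^ 2))
      = (p - 2 * q * a) * ((a - b) + (a - c)) + q * ((a - b) ^ 2 + (a - c) ^ 2) := by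
  ring

theorem stmt_10_general (ε δ C : ℝ) (hε : 0 < ε) (hδ : 0 < δ) (hC : 0 < C)
    (a b c : ℝ) (h1 : ε ≤ max (a - b) (a - c)) (h2 : 0 ≤ (a - b) + (a - c))
    (ha : |a| ≤ C)
    (g : ℝ → ℝ) (hg : ∀ α, g α = (1 + δ) * α - (δ / (4 * C)) * α^2) :
    (g a - g b) + (g a - g c) ≥ (δ / (4 * C)) * ε^2 := by
  have hq : 0 ≤ δ / (4 * C) := by positivity
  have hslope : 0 ≤ (1 + δ) - 2 * (δ / (4 * C)) * a := by
    have : 2 * (δ / (4 * C)) * a ≤ δ / 2 :=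
      calc 2 * (δ / (4 * C)) * a ≤ 2 * (δ / (4 * C)) * C := by gcongr; exact (abs_le.mp ha).2
        _ = δ / 2 := by field_simp; ring
    linarith
  rw [hg a, hg b, hg c, quadratic_sum_sub_eq]
  have hsq := mul_le_mul_of_nonneg_left (sq_le_sq_add_sq_of_le_max hε.le h1) hq
  linarith [mul_nonneg hslope h2]

theorem stmt_10 (ε δ C : ℝ) (hε : 0 < ε) (hδ : 0 < δ) (hC : 0 < C)
    (a b c : ℝ) (h1 : ε ≤ max (a - b) (a - c)) (h2 : 0 ≤ (a - b) + (a - c))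
    (ha : |a| ≤ C) (hb : |b| ≤ C) (hc : |c| ≤ C)
    (g : ℝ → ℝ) (hg : ∀ α, g α = (1 + δ) * α - (δ / (4 * C)) * α^2) :
    (g a - g b) + (g a - g c) ≥ (δ / (4 * C)) * ε^2 :=
  stmt_10_general ε δ C hε hδ hC a b c h1 h2 ha g hg
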